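/- arXiv:2502.09094 — 2 statements merged into one kernel-verified Lean document; each statement's English description precedes it below -/
import Mathlib

section
/- Let M ≥ 1 be an integer. For r ∈ (0,1) and ϑ uniformly distributed on [0,2π], let P(r) denote the probability that (1−r²)/|1−re^{iϑ}|^{2M} > 1. Then P(r) is asymptotically equivalent to (1−r²)^{1/(2M)}/π as r → 1⁻, i.e. lim_{r→1⁻} π·P(r)/(1−r²)^{1/(2M)} = 1. -/
/-
The event is `‖1 - r e^{iϑ}‖² < ε` with `ε = (1 - r²)^{1/M}`, i.e. `cos ϑ > c` with
`c = (1 + r² - ε)/(2r)`: an arc of half-width `θ = arccos c`, so `P(r) = θ/π`.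
Since `2(1 - c) = (ε - (1 - r)²)/r` and `(1 - r)² ≤ (1 - r) ε = o(ε)`, we get
`θ² ~ 2(1 - cos θ) = 2(1 - c) ~ ε`, i.e. `θ ~ √ε = (1 - r²)^{1/(2M)}`.
-/

open Complex MeasureTheory Set Filter
open scoped ENNReal Topology

noncomputable section

/-- For `r ∈ (0,1)` and `ϑ` uniform on `[0,2π]`, the probability that
`(1-r²)/|1-r e^{iϑ}|^{2M} > 1`. -/
def tailProb (M : ℕ) (r : ℝ) : ℝ :=
  (volume {t : ℝ | t ∈ Set.Icc (0 : ℝ) (2 * Real.pi) ∧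
      1 < (1 - r ^ 2) / ‖(1 : ℂ) - (r : ℂ) * Complex.exp ((t : ℂ) * Complex.I)‖ ^ (2 * M)}).toReal
    / (2 * Real.pi)

open scoped Real

-- By the law of cosines, `‖1 - r e^{it}‖² < ε` exactly when `|t| < arcHalfWidth r ε` (mod `2π`).
def arcHalfWidth (r ε : ℝ) : ℝ := Real.arccos ((1 + r ^ 2 - ε) / (2 * r))

lemma norm_one_sub_ofReal_mul_exp_sq (r t : ℝ) :
    ‖(1 : ℂ) - (r : ℂ) * Complex.exp ((t : ℂ) * Complex.I)‖ ^ 2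
      = 1 + r ^ 2 - 2 * r * Real.cos t := by
  rw [← Complex.normSq_eq_norm_sq, Complex.normSq_apply]
  simp only [Complex.sub_re, Complex.sub_im, Complex.mul_re, Complex.mul_im,
    Complex.exp_ofReal_mul_I_re, Complex.exp_ofReal_mul_I_im, Complex.one_re, Complex.one_im,
    Complex.ofReal_re, Complex.ofReal_im]
  nlinarith [Real.sin_sq_add_cos_sq t]

lemma one_lt_div_norm_pow_iff {M : ℕ} (hM : M ≠ 0) {r a : ℝ} (hr : 0 < r) (hr1 : r ≠ 1)
    (ha : 0 < a) (t : ℝ) :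
    1 < a / ‖(1 : ℂ) - (r : ℂ) * Complex.exp ((t : ℂ) * Complex.I)‖ ^ (2 * M)
      ↔ (1 + r ^ 2 - a ^ ((1 : ℝ) / M)) / (2 * r) < Real.cos t := by
  have hu : 0 < 1 + r ^ 2 - 2 * r * Real.cos t := by
    have : 0 < (1 - r) ^ 2 := by positivity [sub_ne_zero.mpr hr1.symm]
    nlinarith [Real.cos_le_one t]
  rw [pow_mul, norm_one_sub_ofReal_mul_exp_sq, one_lt_div (by positivity), ← Real.rpow_natCast,
    ← Real.lt_rpow_inv_iff_of_pos hu.le ha.le (by positivity), ← one_div,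
    div_lt_iff₀ (by positivity)]
  constructor <;> intro h <;> linarith

lemma lt_cos_iff_lt_arccos {c t : ℝ} (hc : c ∈ Icc (-1) 1) (ht : t ∈ Icc 0 π) :
    c < Real.cos t ↔ t < Real.arccos c := by
  conv_lhs => rw [← Real.cos_arccos hc.1 hc.2]
  exact Real.strictAntiOn_cos.lt_iff_gt ⟨Real.arccos_nonneg c, Real.arccos_le_pi c⟩ ht

lemma setOf_mem_Icc_and_lt_cos {c : ℝ} (hc : c ∈ Icc (-1) 1) :
    {t : ℝ | t ∈ Icc 0 (2 * π) ∧ c < Real.cos t}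
      = Ico 0 (Real.arccos c) ∪ Ioc (2 * π - Real.arccos c) (2 * π) := by
  have harccos := Real.arccos_le_pi c
  ext t
  simp only [mem_ofPred_eq, mem_union, mem_Icc, mem_Ico, mem_Ioc]
  constructor
  · rintro ⟨⟨ht0, ht2π⟩, hct⟩
    rcases le_or_gt t π with htπ | htπ
    · exact Or.inl ⟨ht0, (lt_cos_iff_lt_arccos hc ⟨ht0, htπ⟩).1 hct⟩
    · rw [← Real.cos_two_pi_sub, lt_cos_iff_lt_arccos hc ⟨by linarith, by linarith⟩] at hct
      exact Or.inr ⟨by linarith, ht2π⟩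
  · rintro (⟨ht0, htθ⟩ | ⟨htθ, ht2π⟩)
    · exact ⟨⟨ht0, by linarith⟩, (lt_cos_iff_lt_arccos hc ⟨ht0, by linarith⟩).2 htθ⟩
    · refine ⟨⟨by linarith [Real.arccos_nonneg c], ht2π⟩, ?_⟩
      rw [← Real.cos_two_pi_sub, lt_cos_iff_lt_arccos hc ⟨by linarith, by linarith⟩]
      linarith

lemma volume_setOf_mem_Icc_and_lt_cos {c : ℝ} (hc : c ∈ Icc (-1) 1) :
    volume {t : ℝ | t ∈ Icc 0 (2 * π) ∧ c < Real.cos t}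
      = ENNReal.ofReal (2 * Real.arccos c) := by
  have hθ0 := Real.arccos_nonneg c
  have hdisj : Disjoint (Ico 0 (Real.arccos c)) (Ioc (2 * π - Real.arccos c) (2 * π)) :=
    Set.disjoint_left.2 fun t ht ht' => by linarith [ht.2, ht'.1, Real.arccos_le_pi c]
  rw [setOf_mem_Icc_and_lt_cos hc, measure_union hdisj measurableSet_Ioc, Real.volume_Ico,
    Real.volume_Ioc, ← ENNReal.ofReal_add (by linarith) (by linarith)]
  ring_nf

lemma tailProb_eq_arcHalfWidth {M : ℕ} (hM : 1 ≤ M) {r : ℝ} (hr : r ∈ Ioo 0 1) :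
    tailProb M r = arcHalfWidth r ((1 - r ^ 2) ^ ((1 : ℝ) / M)) / π := by
  obtain ⟨hr0, hr1⟩ := hr
  have hs : 0 < 1 - r ^ 2 := by nlinarith
  set ε := (1 - r ^ 2) ^ ((1 : ℝ) / M)
  have hε_ge : 1 - r ^ 2 ≤ ε := Real.self_le_rpow_of_le_one hs.le (by nlinarith)
    (div_le_one_of_le₀ (by exact_mod_cast hM) (by positivity))
  have hε_le : ε ≤ 1 := Real.rpow_le_one hs.le (by nlinarith) (by positivity)
  have hc : (1 + r ^ 2 - ε) / (2 * r) ∈ Icc (-1) 1 := by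
    rw [mem_Icc, le_div_iff₀ (by positivity), div_le_iff₀ (by positivity)]
    constructor <;> nlinarith
  have hset : {t : ℝ | t ∈ Icc 0 (2 * π) ∧
      1 < (1 - r ^ 2) / ‖(1 : ℂ) - (r : ℂ) * Complex.exp ((t : ℂ) * Complex.I)‖ ^ (2 * M)}
      = {t : ℝ | t ∈ Icc 0 (2 * π) ∧ (1 + r ^ 2 - ε) / (2 * r) < Real.cos t} :=
    Set.ext fun t => and_congr_right fun _ => one_lt_div_norm_pow_iff (by omega) hr0 hr1.ne hs t
  rw [tailProb, hset, volume_setOf_mem_Icc_and_lt_cos hc,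
    ENNReal.toReal_ofReal (by linarith [Real.arccos_nonneg ((1 + r ^ 2 - ε) / (2 * r))]),
    arcHalfWidth]
  field_simp

lemma tendsto_arccos_div_sqrt_two_mul_one_sub :
    Tendsto (fun x => Real.arccos x / √(2 * (1 - x))) (𝓝[<] 1) (𝓝 1) := by
  have hsinc : Tendsto (fun x => (Real.sinc (Real.arccos x / 2))⁻¹) (𝓝[<] 1) (𝓝 1) := by
    have := ((Real.continuous_sinc.comp (Real.continuous_arccos.div_const 2)).tendsto 1).inv₀
      (by simp)
    simpa using this.mono_left nhdsWithin_le_nhds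
  refine hsinc.congr' ?_
  filter_upwards [Ioo_mem_nhdsLT (show (-1 : ℝ) < 1 by norm_num)] with x hx
  set θ := Real.arccos x / 2 with hθ_def
  have hθ0 : 0 < θ := by have := Real.arccos_pos.2 hx.2; positivity
  have hθπ : θ ≤ π := by linarith [Real.arccos_le_pi x, Real.pi_pos]
  have hsqrt : √(2 * (1 - x)) = 2 * Real.sin θ := by
    have hx' : x = 1 - 2 * Real.sin θ ^ 2 := by
      rw [← Real.cos_arccos hx.1.le hx.2.le, show Real.arccos x = 2 * θ by ring,
        Real.cos_two_mul', Real.cos_sq']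
      ring
    rw [hx', show 2 * (1 - (1 - 2 * Real.sin θ ^ 2)) = (2 * Real.sin θ) ^ 2 by ring,
      Real.sqrt_sq (by linarith [Real.sin_nonneg_of_nonneg_of_le_pi hθ0.le hθπ])]
  rw [Real.sinc_of_ne_zero hθ0.ne', hsqrt, inv_div, hθ_def]
  field_simp

lemma tendsto_arcHalfWidth_div_sqrt {ε : ℝ → ℝ} (hε : Tendsto ε (𝓝[<] 1) (𝓝[>] 0))
    (hδ : Tendsto (fun r => (1 - r) ^ 2 / ε r) (𝓝[<] 1) (𝓝 0)) :
    Tendsto (fun r => arcHalfWidth r (ε r) / √(ε r)) (𝓝[<] 1) (𝓝 1) := by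
  set c : ℝ → ℝ := fun r => (1 + r ^ 2 - ε r) / (2 * r)
  set q : ℝ → ℝ := fun r => 2 * (1 - c r) / ε r
  have hpos : ∀ᶠ r in 𝓝[<] 1, 0 < r ∧ 0 < ε r := by
    filter_upwards [Ioo_mem_nhdsLT one_pos, hε.eventually_mem self_mem_nhdsWithin] with r hr hεr
    exact ⟨hr.1, hεr⟩
  have hq : Tendsto q (𝓝[<] 1) (𝓝 1) := by
    have hlim : Tendsto (fun r => (1 - (1 - r) ^ 2 / ε r) / r) (𝓝[<] 1) (𝓝 ((1 - 0) / 1)) :=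
      (tendsto_const_nhds.sub hδ).div (tendsto_id'.2 nhdsWithin_le_nhds) one_ne_zero
    rw [sub_zero, div_one] at hlim
    refine hlim.congr' ?_
    filter_upwards [hpos] with r ⟨hr, hεr⟩
    simp only [q, c]
    field_simp
    ring
  have hc : Tendsto c (𝓝[<] 1) (𝓝[<] 1) := by
    have hεq : ∀ᶠ r in 𝓝[<] 1, c r = 1 - ε r * q r / 2 := by
      filter_upwards [hpos] with r ⟨_, hεr⟩
      simp only [q]
      field_simp
      ring
    refine tendsto_nhdsWithin_iff.2 ⟨?_, ?_⟩
    · have hlim : Tendsto (fun r => 1 - ε r * q r / 2) (𝓝[<] 1) (𝓝 1) := by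
        simpa using (tendsto_const_nhds (x := (1 : ℝ))).sub
          (((tendsto_nhds_of_tendsto_nhdsWithin hε).mul hq).div_const 2)
      refine hlim.congr' ?_
      filter_upwards [hεq] with r hr using hr.symm
    · filter_upwards [hεq, hpos, hq.eventually (lt_mem_nhds one_pos)] with r hr ⟨_, hεr⟩ hqr
      rw [mem_Iio, hr]
      nlinarith
  have hprod := (tendsto_arccos_div_sqrt_two_mul_one_sub.comp hc).mul
    ((Real.continuous_sqrt.tendsto 1).comp hq)
  rw [Real.sqrt_one, one_mul] at hprod
  refine hprod.congr' ?_
  filter_upwards [hc.eventually self_mem_nhdsWithin, hpos] with r hcr ⟨_, hεr⟩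
  have hne : √(2 * (1 - c r)) ≠ 0 := (Real.sqrt_pos.2 (by linarith [show c r < 1 from hcr])).ne'
  simp only [Function.comp_apply, q]
  rw [Real.sqrt_div' _ hεr.le]
  field_simp
  rfl

lemma tendsto_one_sub_sq_rpow_nhdsGT_zero {p : ℝ} (hp : 0 < p) :
    Tendsto (fun r : ℝ => (1 - r ^ 2) ^ p) (𝓝[<] 1) (𝓝[>] 0) := by
  refine tendsto_nhdsWithin_iff.2 ⟨?_, ?_⟩
  · have hlim : Tendsto (fun r : ℝ => 1 - r ^ 2) (𝓝[<] 1) (𝓝 (1 - 1 ^ 2)) :=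
      ((continuous_const.sub (continuous_pow 2)).tendsto 1).mono_left nhdsWithin_le_nhds
    rw [one_pow, sub_self] at hlim
    simpa [Real.zero_rpow hp.ne'] using hlim.rpow_const (Or.inr hp.le)
  · filter_upwards [Ioo_mem_nhdsLT one_pos] with r hr
    exact Real.rpow_pos_of_pos (by nlinarith [hr.1, hr.2]) p

lemma tendsto_one_sub_sq_div_one_sub_sq_rpow {p : ℝ} (hp : p ≤ 1) :
    Tendsto (fun r : ℝ => (1 - r) ^ 2 / (1 - r ^ 2) ^ p) (𝓝[<] 1) (𝓝 0) := by
  have hlim : Tendsto (fun r : ℝ => 1 - r) (𝓝[<] 1) (𝓝 (1 - 1)) :=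
    ((continuous_const.sub continuous_id).tendsto 1).mono_left nhdsWithin_le_nhds
  rw [sub_self] at hlim
  refine tendsto_of_tendsto_of_tendsto_of_le_of_le' tendsto_const_nhds hlim ?_ ?_
  all_goals filter_upwards [Ioo_mem_nhdsLT one_pos] with r ⟨hr0, hr1⟩
  all_goals have hs : 0 < 1 - r ^ 2 := by nlinarith
  · positivity
  · -- `1 - r ≤ 1 - r ^ 2 ≤ (1 - r ^ 2) ^ p`
    have hge := Real.self_le_rpow_of_le_one hs.le (by nlinarith) hp
    rw [div_le_iff₀ (by positivity)]
    nlinarith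

/-- **Lemma (asymptotics).** Let `M ≥ 1`.  Then
`P( (1-r²)/|1-r e^{iϑ}|^{2M} > 1 ) ∼ (1-r²)^{1/(2M)}/π` as `r → 1⁻`, i.e.
`π · P(r)/(1-r²)^{1/(2M)} → 1`. -/
theorem statement16 (M : ℕ) (hM : 1 ≤ M) :
    Tendsto (fun r : ℝ => Real.pi * tailProb M r / (1 - r ^ 2) ^ ((1 : ℝ) / (2 * M)))
      (nhdsWithin 1 (Set.Iio 1)) (𝓝 1) := by
  have hp : (0 : ℝ) < 1 / M := by positivity
  have hp1 : (1 : ℝ) / M ≤ 1 := div_le_one_of_le₀ (by exact_mod_cast hM) (by positivity)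
  refine (tendsto_arcHalfWidth_div_sqrt (tendsto_one_sub_sq_rpow_nhdsGT_zero hp)
    (tendsto_one_sub_sq_div_one_sub_sq_rpow hp1)).congr' ?_
  filter_upwards [Ioo_mem_nhdsLT one_pos] with r hr
  have hs : 0 ≤ 1 - r ^ 2 := by nlinarith [hr.1, hr.2]
  have hsqrt : (1 - r ^ 2) ^ ((1 : ℝ) / (2 * M)) = √((1 - r ^ 2) ^ ((1 : ℝ) / M)) := by
    rw [Real.sqrt_eq_rpow, ← Real.rpow_mul hs]
    ring_nf
  rw [tailProb_eq_arcHalfWidth hM hr, hsqrt, mul_div_cancel₀ _ Real.pi_ne_zero]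
end
end

section
/- Let M ≥ 1 be an integer. There exist constants c, C > 0 and r₀ ∈ (0,1), depending only on M, such that for every r ∈ (r₀,1): c·(1−r²)^{1/(2M)} ≤ (1/2π)·∫_{E_r} (1−r²)/|1−re^{it}|^{2M} dt ≤ C·(1−r²)^{1/(2M)}, where E_r = { t ∈ [0,2π] : (1−r²)/|1−re^{it}|^{2M} ≤ 1 }. -/
open Complex MeasureTheory Set
open scoped ENNReal

noncomputable section

/-!
Write `δ = (1 - r²)^(1/(2M))` and `N(t) = ‖1 - r e^{it}‖`, so that the integrand is
`F(t) = (δ / N(t))^(2M)`. For `r ≥ 1/2` and `|t| ≤ π` we have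
`|t|/3 ≤ N(t) ≤ (1 - r) + |t|`, and `1 - r ≤ 1 - r² ≤ δ` once `δ ≤ 1`.

Lower bound: on `[4δ, 8δ]` these give `δ ≤ N ≤ 9δ`, so `9^(-2M) ≤ F ≤ 1` there; this
interval lies in `E_r` and contributes at least `4δ · 9^(-2M)`.

Upper bound: on `E_r` the integrand is `min F 1`, which is symmetric under `t ↦ 2π - t`.
On `[0, π]` it is at most `1` on `[0, 3δ]` and at most `(3δ/t)^(2M) ≤ (3δ/t)^2` on
`[3δ, π]`, so its integral over `[0, π]` is at most `6δ`.
-/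

section UnitCircle

variable (r t : ℝ)

theorem norm_one_sub_mul_exp_sq :
    ‖(1 : ℂ) - (r : ℂ) * Complex.exp ((t : ℂ) * Complex.I)‖ ^ 2
      = (1 - r) ^ 2 + 2 * r * (1 - Real.cos t) := by
  rw [Complex.sq_norm, Complex.normSq_apply]
  simp only [Complex.sub_re, Complex.sub_im, Complex.mul_re, Complex.mul_im, Complex.one_re,
    Complex.one_im, Complex.ofReal_re, Complex.ofReal_im, Complex.exp_ofReal_mul_I_re,
    Complex.exp_ofReal_mul_I_im, zero_mul, sub_zero, add_zero, zero_sub]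
  linear_combination r ^ 2 * Real.sin_sq_add_cos_sq t

theorem norm_one_sub_mul_exp_le :
    ‖(1 : ℂ) - (r : ℂ) * Complex.exp ((t : ℂ) * Complex.I)‖ ≤ |1 - r| + |r| * |t| := by
  calc ‖(1 : ℂ) - (r : ℂ) * Complex.exp ((t : ℂ) * Complex.I)‖
      = ‖((1 - r : ℝ) : ℂ) - (r : ℂ) * (Complex.exp (Complex.I * t) - 1)‖ := by
        push_cast; ring_nf
    _ ≤ ‖((1 - r : ℝ) : ℂ)‖ + ‖(r : ℂ)‖ * ‖Complex.exp (Complex.I * t) - 1‖ :=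
        (norm_sub_le _ _).trans_eq (by rw [norm_mul])
    _ ≤ |1 - r| + |r| * |t| := by
        rw [Complex.norm_real, Complex.norm_real, Real.norm_eq_abs, Real.norm_eq_abs]
        gcongr
        exact Real.norm_exp_I_mul_ofReal_sub_one_le

variable {r t}

theorem norm_one_sub_mul_exp_pos (hr : |r| < 1) :
    0 < ‖(1 : ℂ) - (r : ℂ) * Complex.exp ((t : ℂ) * Complex.I)‖ := by
  have h := norm_sub_norm_le (1 : ℂ) ((r : ℂ) * Complex.exp ((t : ℂ) * Complex.I))
  rw [norm_one, norm_mul, Complex.norm_exp_ofReal_mul_I, Complex.norm_real, Real.norm_eq_abs,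
    mul_one] at h
  linarith

theorem abs_div_three_le_norm_one_sub_mul_exp (hr : 1 / 2 ≤ r) (ht : |t| ≤ Real.pi) :
    |t| / 3 ≤ ‖(1 : ℂ) - (r : ℂ) * Complex.exp ((t : ℂ) * Complex.I)‖ := by
  have hcos := Real.cos_le_one_sub_mul_cos_sq ht
  have hπ : Real.pi ^ 2 ≤ 16 := by nlinarith [Real.pi_le_four, Real.pi_pos]
  have hquad : (|t| / 3) ^ 2 ≤ 2 / Real.pi ^ 2 * t ^ 2 := by
    rw [div_pow, sq_abs, div_mul_eq_mul_div, div_le_div_iff₀ (by norm_num) (by positivity)]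
    nlinarith [sq_nonneg t]
  rw [← pow_le_pow_iff_left₀ (by positivity) (norm_nonneg _) two_ne_zero,
    norm_one_sub_mul_exp_sq]
  nlinarith [sq_nonneg (1 - r)]

theorem norm_one_sub_mul_exp_two_pi_sub :
    ‖(1 : ℂ) - (r : ℂ) * Complex.exp (((2 * Real.pi - t : ℝ) : ℂ) * Complex.I)‖
      = ‖(1 : ℂ) - (r : ℂ) * Complex.exp ((t : ℂ) * Complex.I)‖ := by
  rw [← pow_left_inj₀ (norm_nonneg _) (norm_nonneg _) two_ne_zero, norm_one_sub_mul_exp_sq,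
    norm_one_sub_mul_exp_sq, Real.cos_two_pi_sub]

end UnitCircle

theorem intervalIntegral_le_two_mul_of_le_one_of_le_sq {g : ℝ → ℝ} {c a : ℝ} (hc : 0 < c)
    (hca : c ≤ a) (hg : IntervalIntegrable g volume 0 a) (h_one : ∀ t ∈ Icc 0 c, g t ≤ 1)
    (h_sq : ∀ t ∈ Icc c a, g t ≤ (c / t) ^ 2) :
    ∫ t in (0 : ℝ)..a, g t ≤ 2 * c := by
  have hg₁ : IntervalIntegrable g volume 0 c :=
    hg.mono_set (uIcc_subset_uIcc left_mem_uIcc (mem_uIcc_of_le hc.le hca))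
  have hg₂ : IntervalIntegrable g volume c a :=
    hg.mono_set (uIcc_subset_uIcc (mem_uIcc_of_le hc.le hca) right_mem_uIcc)
  have h_zero_notMem : (0 : ℝ) ∉ uIcc c a := by
    rw [uIcc_of_le hca]; exact fun h => hc.not_ge h.1
  have h_sq_int : IntervalIntegrable (fun t => (c / t) ^ 2) volume c a :=
    (continuousOn_const.div continuousOn_id fun t ht => ne_of_mem_of_not_mem ht h_zero_notMem
      ).pow 2 |>.intervalIntegrable
  have h_tail : ∫ t in c..a, (c / t) ^ 2 = c - c ^ 2 / a := by
    simp_rw [div_pow, div_eq_mul_inv (c ^ 2), ← zpow_natCast, ← zpow_neg]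
    rw [intervalIntegral.integral_const_mul,
      integral_zpow (Or.inr ⟨by norm_num, h_zero_notMem⟩)]
    norm_num [Real.rpow_neg_one]
    field_simp
    ring
  calc ∫ t in (0 : ℝ)..a, g t = (∫ t in (0 : ℝ)..c, g t) + ∫ t in c..a, g t :=
        (intervalIntegral.integral_add_adjacent_intervals hg₁ hg₂).symm
    _ ≤ (∫ _ in (0 : ℝ)..c, (1 : ℝ)) + ∫ t in c..a, (c / t) ^ 2 := by
        gcongr
        · exact intervalIntegral.integral_mono_on hc.le hg₁ intervalIntegrable_const h_one
        · exact intervalIntegral.integral_mono_on hca hg₂ h_sq_int h_sq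
    _ ≤ 2 * c := by
        rw [intervalIntegral.integral_const, h_tail, smul_eq_mul, mul_one, sub_zero]
        have : 0 ≤ c ^ 2 / a := div_nonneg (sq_nonneg c) (hc.le.trans hca)
        linarith

theorem intervalIntegral_two_mul_eq_two_mul_of_symm {g : ℝ → ℝ} {a : ℝ}
    (hg : IntervalIntegrable g volume 0 (2 * a)) (h_symm : ∀ t, g (2 * a - t) = g t) :
    ∫ t in (0 : ℝ)..(2 * a), g t = 2 * ∫ t in (0 : ℝ)..a, g t := by
  have ha : a ∈ uIcc 0 (2 * a) := by
    rcases le_total 0 a with h | h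
    · exact mem_uIcc_of_le h (by linarith)
    · exact mem_uIcc_of_ge (by linarith) h
  have h_right : ∫ t in a..(2 * a), g t = ∫ t in (0 : ℝ)..a, g t := by
    calc ∫ t in a..(2 * a), g t = ∫ t in a..(2 * a), g (2 * a - t) := by simp only [h_symm]
      _ = ∫ t in (0 : ℝ)..a, g t := by
          rw [intervalIntegral.integral_comp_sub_left]
          congr 1 <;> ring
  rw [← intervalIntegral.integral_add_adjacent_intervals
    (hg.mono_set (uIcc_subset_uIcc left_mem_uIcc ha))
    (hg.mono_set (uIcc_subset_uIcc ha right_mem_uIcc)), h_right, two_mul]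

theorem rpow_one_div_two_mul_pow {x : ℝ} (hx : 0 ≤ x) {M : ℕ} (hM : M ≠ 0) :
    (x ^ ((1 : ℝ) / (2 * M))) ^ (2 * M) = x := by
  have h := Real.rpow_inv_natCast_pow hx (n := 2 * M) (by omega)
  rwa [Nat.cast_mul, Nat.cast_ofNat, ← one_div] at h

def powKernel (M : ℕ) (r t : ℝ) : ℝ :=
  (1 - r ^ 2) / ‖(1 : ℂ) - (r : ℂ) * Complex.exp ((t : ℂ) * Complex.I)‖ ^ (2 * M)

def truncationSet (M : ℕ) (r : ℝ) : Set ℝ :=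
  {t : ℝ | t ∈ Icc (0 : ℝ) (2 * Real.pi) ∧ powKernel M r t ≤ 1}

namespace powKernel

variable {M : ℕ} {r t δ : ℝ}

theorem continuous (hr : |r| < 1) : Continuous (powKernel M r) :=
  continuous_const.div (by fun_prop) fun _ => pow_ne_zero _ (norm_one_sub_mul_exp_pos hr).ne'

theorem nonneg (hr : |r| ≤ 1) : 0 ≤ powKernel M r t :=
  div_nonneg (by nlinarith [sq_abs r, abs_nonneg r]) (by positivity)

theorem two_pi_sub : powKernel M r (2 * Real.pi - t) = powKernel M r t := by
  rw [powKernel, powKernel, norm_one_sub_mul_exp_two_pi_sub]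

theorem eq_div_pow (hδ : δ ^ (2 * M) = 1 - r ^ 2) :
    powKernel M r t =
      (δ / ‖(1 : ℂ) - (r : ℂ) * Complex.exp ((t : ℂ) * Complex.I)‖) ^ (2 * M) := by
  rw [powKernel, ← hδ, div_pow]

theorem mem_Icc_of_mem_Icc (hδ : δ ^ (2 * M) = 1 - r ^ 2) (hδ0 : 0 < δ) (hr : 1 / 2 ≤ r)
    (hr1 : r ≤ 1) (h1r : 1 - r ≤ δ) (hδπ : 8 * δ ≤ Real.pi)
    (ht : t ∈ Icc (4 * δ) (8 * δ)) : powKernel M r t ∈ Icc ((1 / 9) ^ (2 * M)) 1 := by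
  set N := ‖(1 : ℂ) - (r : ℂ) * Complex.exp ((t : ℂ) * Complex.I)‖
  have ht0 : 0 ≤ t := by linarith [ht.1]
  have hN_ge : δ ≤ N := by
    have := abs_div_three_le_norm_one_sub_mul_exp hr (t := t)
      (by rw [abs_of_nonneg ht0]; linarith [ht.2])
    rw [abs_of_nonneg ht0] at this
    linarith [ht.1]
  have hN_le : N ≤ 9 * δ := by
    have := norm_one_sub_mul_exp_le r t
    rw [abs_of_nonneg (by linarith), abs_of_nonneg (by linarith), abs_of_nonneg ht0] at this
    nlinarith [ht.2]
  have hN : 0 < N := hδ0.trans_le hN_ge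
  rw [eq_div_pow hδ]
  constructor
  · exact pow_le_pow_left₀ (by norm_num) (by rw [le_div_iff₀ hN]; linarith) _
  · exact pow_le_one₀ (by positivity) (div_le_one_of_le₀ hN_ge hN.le)

theorem le_div_sq (hM : 1 ≤ M) (hδ : δ ^ (2 * M) = 1 - r ^ 2) (hδ0 : 0 < δ) (hr : 1 / 2 ≤ r)
    (ht : t ∈ Icc (3 * δ) Real.pi) :
    powKernel M r t ≤ (3 * δ / t) ^ 2 := by
  obtain ⟨ht_ge, ht_le⟩ := ht
  have ht0 : 0 < t := by linarith
  have hN := abs_div_three_le_norm_one_sub_mul_exp hr (t := t) (by rwa [abs_of_pos ht0])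
  rw [abs_of_pos ht0] at hN
  have hratio :
      δ / ‖(1 : ℂ) - (r : ℂ) * Complex.exp ((t : ℂ) * Complex.I)‖ ≤ 3 * δ / t :=
    calc _ ≤ δ / (t / 3) := div_le_div_of_nonneg_left hδ0.le (by positivity) hN
      _ = 3 * δ / t := by field_simp
  rw [eq_div_pow hδ]
  calc _ ≤ (3 * δ / t) ^ (2 * M) := by gcongr
    _ ≤ (3 * δ / t) ^ 2 :=
        pow_le_pow_of_le_one (by positivity) ((div_le_one ht0).2 ht_ge) (by omega)

end powKernel

section TruncatedIntegral

variable {M : ℕ} {r δ : ℝ}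

theorem measurableSet_truncationSet (hr : |r| < 1) : MeasurableSet (truncationSet M r) :=
  measurableSet_Icc.inter
    (measurableSet_le (powKernel.continuous hr).measurable measurable_const)

theorem le_setIntegral_truncationSet (hδ : δ ^ (2 * M) = 1 - r ^ 2) (hδ0 : 0 < δ)
    (hr : 1 / 2 ≤ r) (hr1 : r < 1) (h1r : 1 - r ≤ δ) (hδπ : 8 * δ ≤ Real.pi) :
    4 * δ * (1 / 9) ^ (2 * M) ≤ ∫ t in truncationSet M r, powKernel M r t := by
  have hr_abs : |r| < 1 := abs_lt.2 ⟨by linarith, hr1⟩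
  have hbounds := fun t (ht : t ∈ Icc (4 * δ) (8 * δ)) =>
    powKernel.mem_Icc_of_mem_Icc hδ hδ0 hr hr1.le h1r hδπ ht
  have hsub : Icc (4 * δ) (8 * δ) ⊆ truncationSet M r := fun t ht =>
    ⟨⟨by linarith [ht.1], by linarith [ht.2, Real.pi_gt_three]⟩, (hbounds t ht).2⟩
  calc 4 * δ * (1 / 9) ^ (2 * M) = ∫ _ in Icc (4 * δ) (8 * δ), (1 / 9 : ℝ) ^ (2 * M) := by
        rw [setIntegral_const, Measure.real, Real.volume_Icc, ENNReal.toReal_ofReal (by linarith),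
          smul_eq_mul]
        ring
    _ ≤ ∫ t in Icc (4 * δ) (8 * δ), powKernel M r t :=
        setIntegral_mono_on (integrableOn_const measure_Icc_lt_top.ne)
          (powKernel.continuous hr_abs).integrableOn_Icc measurableSet_Icc fun t ht =>
          (hbounds t ht).1
    _ ≤ ∫ t in truncationSet M r, powKernel M r t :=
        setIntegral_mono_set
          (((powKernel.continuous hr_abs).integrableOn_Icc).mono_set fun _ ht => ht.1)
          (Filter.Eventually.of_forall fun _ => powKernel.nonneg hr_abs.le)
          hsub.eventuallyLE

theorem setIntegral_truncationSet_le (hM : 1 ≤ M) (hδ : δ ^ (2 * M) = 1 - r ^ 2) (hδ0 : 0 < δ)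
    (hr : 1 / 2 ≤ r) (hr1 : r < 1) (hδπ : 3 * δ ≤ Real.pi) :
    ∫ t in truncationSet M r, powKernel M r t ≤ 12 * δ := by
  have hr_abs : |r| < 1 := abs_lt.2 ⟨by linarith, hr1⟩
  set g := fun t => min (powKernel M r t) 1
  have hg : Continuous g := (powKernel.continuous hr_abs).min continuous_const
  have hhalf : ∫ t in (0 : ℝ)..Real.pi, g t ≤ 2 * (3 * δ) :=
    intervalIntegral_le_two_mul_of_le_one_of_le_sq (by positivity) hδπ
      (hg.intervalIntegrable _ _) (fun t _ => min_le_right _ _)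
      fun t ht => (min_le_left _ _).trans (powKernel.le_div_sq hM hδ hδ0 hr ht)
  calc ∫ t in truncationSet M r, powKernel M r t = ∫ t in truncationSet M r, g t :=
        setIntegral_congr_fun (measurableSet_truncationSet hr_abs) fun t ht =>
          (min_eq_left ht.2).symm
    _ ≤ ∫ t in Icc 0 (2 * Real.pi), g t :=
        setIntegral_mono_set hg.integrableOn_Icc
          (Filter.Eventually.of_forall fun _ => le_min (powKernel.nonneg hr_abs.le) zero_le_one)
          (LE.le.eventuallyLE fun _ ht => ht.1)
    _ = ∫ t in (0 : ℝ)..(2 * Real.pi), g t := by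
        rw [intervalIntegral.integral_of_le (by positivity), integral_Icc_eq_integral_Ioc]
    _ = 2 * ∫ t in (0 : ℝ)..Real.pi, g t :=
        intervalIntegral_two_mul_eq_two_mul_of_symm (hg.intervalIntegrable _ _) fun t => by
          simp only [g, powKernel.two_pi_sub]
    _ ≤ 12 * δ := by linarith

end TruncatedIntegral

/-- **Lemma (two-sided estimate of the truncated expectation).** Let `M ≥ 1`.  There are
`c, C > 0` and `r₀ ∈ (0,1)`, depending only on `M`, such that for every `r ∈ (r₀, 1)`:
`c (1-r²)^{1/(2M)} ≤ (1/2π) ∫_{E_r} (1-r²)/|1-re^{it}|^{2M} dt ≤ C (1-r²)^{1/(2M)}`, where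
`E_r = { t ∈ [0,2π] : (1-r²)/|1-re^{it}|^{2M} ≤ 1 }`. -/
theorem statement17 (M : ℕ) (hM : 1 ≤ M) :
    ∃ c C r₀ : ℝ, 0 < c ∧ 0 < C ∧ 0 < r₀ ∧ r₀ < 1 ∧
      ∀ r : ℝ, r₀ < r → r < 1 →
        c * (1 - r ^ 2) ^ ((1 : ℝ) / (2 * M)) ≤
          (1 / (2 * Real.pi)) *
            ∫ t in {t : ℝ | t ∈ Set.Icc (0 : ℝ) (2 * Real.pi) ∧
                (1 - r ^ 2) / ‖(1 : ℂ) - (r : ℂ) * Complex.exp ((t : ℂ) * Complex.I)‖ ^ (2 * M) ≤ 1},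
              (1 - r ^ 2) / ‖(1 : ℂ) - (r : ℂ) * Complex.exp ((t : ℂ) * Complex.I)‖ ^ (2 * M) ∧
        (1 / (2 * Real.pi)) *
            ∫ t in {t : ℝ | t ∈ Set.Icc (0 : ℝ) (2 * Real.pi) ∧
                (1 - r ^ 2) / ‖(1 : ℂ) - (r : ℂ) * Complex.exp ((t : ℂ) * Complex.I)‖ ^ (2 * M) ≤ 1},
              (1 - r ^ 2) / ‖(1 : ℂ) - (r : ℂ) * Complex.exp ((t : ℂ) * Complex.I)‖ ^ (2 * M) ≤
          C * (1 - r ^ 2) ^ ((1 : ℝ) / (2 * M)) := by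
  have hε : (1 / 10 : ℝ) ^ (2 * M) ≤ 1 := pow_le_one₀ (by norm_num) (by norm_num)
  refine ⟨(1 / 9) ^ (2 * M) / 2, 2, 1 - (1 / 10 : ℝ) ^ (2 * M) / 2, by positivity, two_pos,
    by linarith, by linarith [show (0 : ℝ) < (1 / 10) ^ (2 * M) by positivity], ?_⟩
  intro r hr₀ hr1
  have hr : 1 / 2 ≤ r := by linarith
  have h1r2 : 0 ≤ 1 - r ^ 2 := by nlinarith
  set δ := (1 - r ^ 2) ^ ((1 : ℝ) / (2 * M))
  have hδ : δ ^ (2 * M) = 1 - r ^ 2 := rpow_one_div_two_mul_pow h1r2 (by omega)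
  have hδ0 : 0 < δ := Real.rpow_pos_of_pos (by nlinarith) _
  have hδ_small : δ ≤ 1 / 10 :=
    le_of_pow_le_pow_left₀ (n := 2 * M) (by omega) (by norm_num) (by rw [hδ]; nlinarith)
  have h1r : 1 - r ≤ δ := by
    nlinarith [pow_le_of_le_one hδ0.le (by linarith : δ ≤ 1) (by omega : 2 * M ≠ 0)]
  have hπ := Real.pi_gt_three
  constructor
  · calc (1 / 9) ^ (2 * M) / 2 * δ = 1 / 2 * ((1 / 9) ^ (2 * M) * δ) := by ring
      _ ≤ 2 / Real.pi * ((1 / 9) ^ (2 * M) * δ) := by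
          gcongr ?_ * _
          rw [le_div_iff₀ (by positivity)]
          linarith [Real.pi_le_four]
      _ = 1 / (2 * Real.pi) * (4 * δ * (1 / 9) ^ (2 * M)) := by ring
      _ ≤ _ := by
          gcongr
          exact le_setIntegral_truncationSet hδ hδ0 hr hr1 h1r (by linarith)
  · calc _ ≤ 1 / (2 * Real.pi) * (12 * δ) := by
          gcongr
          exact setIntegral_truncationSet_le hM hδ hδ0 hr hr1 (by linarith)
      _ ≤ 2 * δ := by
          rw [div_mul_eq_mul_div, one_mul, div_le_iff₀ (by positivity)]
          nlinarith
end
end
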